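/- arXiv:2111.03142 — 3 statements merged into one kernel-verified Lean document; each statement's English description precedes it below -/
import Mathlib

section
/- Let α ∈ ℝ^d with αₖ ≥ 0 and ∑ₖ αₖ = d, and suppose ‖α − (1,…,1)‖₂ ≥ ε with 0 < ε ≤ 1. Then ∏_{k=1}^d αₖ ≤ 1 − ε²/(4d). -/
open Real Finset

lemma key_ineq (x : ℝ) (h1 : -(1/2) ≤ x) (h2 : x ≤ 1) :
    1 + x ≤ Real.exp (x - x ^ 2 / 4) := by
  rcases le_or_gt 0 x with hx | hx
  · have hu : 0 ≤ x - x ^ 2 / 4 := by nlinarith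
    have h := Real.sum_le_exp_of_nonneg hu 3
    have hs : ∑ i ∈ range 3, (x - x ^ 2 / 4) ^ i / (i.factorial : ℝ)
        = 1 + (x - x ^ 2 / 4) + (x - x ^ 2 / 4) ^ 2 / 2 := by
      norm_num [Finset.sum_range_succ]
    rw [hs] at h
    nlinarith [sq_nonneg x, sq_nonneg (x - x^2/4)]
  · set u : ℝ := -x + x ^ 2 / 4 with hu_def
    have hu0 : 0 ≤ u := by rw [hu_def]; nlinarith
    have hu1 : |u| ≤ 1 := by
      rw [abs_of_nonneg hu0, hu_def]; nlinarith
    have hb := Real.exp_bound hu1 (n := 2) (by norm_num)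
    have hs : ∑ i ∈ range 2, u ^ i / (i.factorial : ℝ) = 1 + u := by
      simp [Finset.sum_range_succ]
    rw [hs] at hb
    have hub : Real.exp u ≤ 1 + u + u ^ 2 * (3 / 4) := by
      have h' := (abs_le.mp hb).2
      have habs : |u| ^ 2 = u ^ 2 := by rw [abs_of_nonneg hu0]
      rw [habs] at h'
      have : ((Nat.succ 2 : ℕ) : ℝ) / ((Nat.factorial 2 : ℕ) * (2:ℕ) : ℝ) = 3/4 := by
        norm_num [Nat.factorial]
      nlinarith [h', sq_nonneg u]
    have hneg : x - x ^ 2 / 4 = -u := by rw [hu_def]; ring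
    have h1x : (0:ℝ) < 1 + x := by linarith
    have hkey : (1 + x) * Real.exp u ≤ 1 := by
      have hpoly : (1 + x) * (1 + u + u ^ 2 * (3 / 4)) ≤ 1 := by
        rw [hu_def]
        nlinarith [sq_nonneg x, mul_nonneg (neg_nonneg.mpr hx.le) (sq_nonneg x),
          mul_nonneg (mul_nonneg (neg_nonneg.mpr hx.le) (sq_nonneg x)) (neg_nonneg.mpr hx.le)]
      calc (1 + x) * Real.exp u ≤ (1 + x) * (1 + u + u ^ 2 * (3/4)) := by
            apply mul_le_mul_of_nonneg_left hub h1x.le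
        _ ≤ 1 := hpoly
    rw [hneg, Real.exp_neg]
    calc 1 + x = ((1 + x) * Real.exp u) / Real.exp u := by
          rw [mul_div_assoc, div_self (Real.exp_ne_zero u), mul_one]
      _ ≤ 1 / Real.exp u := by gcongr
      _ = (Real.exp u)⁻¹ := one_div _

lemma prod_bound (d : ℕ) (α : Fin d → ℝ) (h0 : ∀ k, 0 ≤ α k)
    (hsum : ∑ k, α k = (d : ℝ)) (j : Fin d) :
    (∏ k, α k) ≤ α j * Real.exp (1 - α j) := by
  rw [← Finset.mul_prod_erase Finset.univ α (Finset.mem_univ j)]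
  apply mul_le_mul_of_nonneg_left _ (h0 j)
  have h1 : ∏ k ∈ Finset.univ.erase j, α k ≤
      ∏ k ∈ Finset.univ.erase j, Real.exp (α k - 1) := by
    apply Finset.prod_le_prod (fun k _ => h0 k)
    intro k _
    have := Real.add_one_le_exp (α k - 1)
    linarith
  have h2 : ∏ k ∈ Finset.univ.erase j, Real.exp (α k - 1) =
      Real.exp (∑ k ∈ Finset.univ.erase j, (α k - 1)) := (Real.exp_sum _ _).symm
  have h3 : ∑ k ∈ Finset.univ.erase j, (α k - 1) = 1 - α j := by
    rw [Finset.sum_erase_eq_sub (Finset.mem_univ j)]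
    rw [Finset.sum_sub_distrib, hsum]
    simp
  rw [h2, h3] at h1
  exact h1

theorem stmt_9 (d : ℕ) (hd : 0 < d) (α : Fin d → ℝ) (ε : ℝ)
    (h0 : ∀ k, 0 ≤ α k) (hsum : ∑ k, α k = (d : ℝ))
    (hε0 : 0 < ε) (hε1 : ε ≤ 1)
    (hfar : ε ≤ Real.sqrt (∑ k, (α k - 1) ^ 2)) :
    (∏ k, α k) ≤ 1 - ε ^ 2 / (4 * d) := by
  have hd2 : 2 ≤ d := by
    by_contra h
    push_neg at h
    interval_cases d
    rw [Fin.sum_univ_one] at hsum hfar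
    rw [Nat.cast_one] at hsum
    rw [hsum] at hfar
    norm_num [Real.sqrt_eq_zero'] at hfar
    linarith
  have h4d : (8:ℝ) ≤ 4 * d := by
    have : (2:ℝ) ≤ (d:ℝ) := by exact_mod_cast hd2
    linarith
  have hε2 : ε ^ 2 ≤ 1 := by nlinarith
  have hrd : ε ^ 2 / (4 * d) ≤ 1 / 8 :=
    div_le_div₀ (by norm_num) hε2 (by norm_num) h4d
  have hεsq : ε ^ 2 ≤ ∑ k, (α k - 1) ^ 2 := by
    have hnn : 0 ≤ ∑ k, (α k - 1) ^ 2 := Finset.sum_nonneg fun k _ => sq_nonneg _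
    calc ε ^ 2 ≤ (Real.sqrt (∑ k, (α k - 1) ^ 2)) ^ 2 :=
          pow_le_pow_left₀ hε0.le hfar 2
      _ = _ := Real.sq_sqrt hnn
  by_cases hbig : ∃ j, 2 ≤ α j
  · obtain ⟨j, hj⟩ := hbig
    have hp := prod_bound d α h0 hsum j
    have he : α j / 2 ≤ Real.exp (α j - 2) := by
      have := Real.add_one_le_exp (α j - 2)
      linarith
    have e1 : Real.exp (1 - α j) = Real.exp (-1) / Real.exp (α j - 2) := by
      rw [← Real.exp_sub]
      ring_nf
    have hmono : α j * Real.exp (1 - α j) ≤ 2 * Real.exp (-1) := by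
      rw [e1, mul_div_assoc', div_le_iff₀ (Real.exp_pos _)]
      nlinarith [Real.exp_pos (-1 : ℝ), he, Real.exp_pos (α j - 2)]
    have hone : Real.exp (-1 : ℝ) * Real.exp 1 = 1 := by
      rw [← Real.exp_add]; norm_num
    have h34 : 2 * Real.exp (-1 : ℝ) ≤ 3 / 4 := by
      nlinarith [Real.exp_one_gt_d9, Real.exp_pos (-1 : ℝ), hone]
    linarith
  · by_cases hsmall : ∃ j, α j ≤ 1 / 2
    · obtain ⟨j, hj⟩ := hsmall
      have hp := prod_bound d α h0 hsum j
      have h2a : 2 * α j ≤ Real.exp (α j - 1 / 2) := by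
        have := Real.add_one_le_exp (α j - 1 / 2)
        linarith
      have hmul := mul_le_mul_of_nonneg_right h2a (Real.exp_pos (1 - α j)).le
      rw [← Real.exp_add] at hmul
      have harg : α j - 1 / 2 + (1 - α j) = 1 / 2 := by ring
      rw [harg] at hmul
      have hsq : Real.exp (1 / 2 : ℝ) * Real.exp (1 / 2 : ℝ) = Real.exp 1 := by
        rw [← Real.exp_add]; norm_num
      have h78 : Real.exp (1 / 2 : ℝ) ≤ 7 / 4 := by
        nlinarith [Real.exp_one_lt_d9, Real.exp_pos (1 / 2 : ℝ), hsq,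
          sq_nonneg (Real.exp (1 / 2 : ℝ) - 7 / 4)]
      have : α j * Real.exp (1 - α j) ≤ 7 / 8 := by nlinarith
      linarith
    · push_neg at hbig hsmall
      have hstep : ∀ k : Fin d, α k ≤ Real.exp ((α k - 1) - (α k - 1) ^ 2 / 4) := by
        intro k
        have hk := key_ineq (α k - 1) (by linarith [hsmall k]) (by linarith [hbig k])
        linarith
      have hprod : (∏ k, α k) ≤ Real.exp (∑ k, ((α k - 1) - (α k - 1) ^ 2 / 4)) := by
        rw [Real.exp_sum]
        exact Finset.prod_le_prod (fun k _ => h0 k) (fun k _ => hstep k)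
      have hzero : ∑ k, (α k - 1) = 0 := by
        rw [Finset.sum_sub_distrib, hsum]
        simp
      have hsumeq : ∑ k, ((α k - 1) - (α k - 1) ^ 2 / 4)
          = -(∑ k, (α k - 1) ^ 2) / 4 := by
        rw [Finset.sum_sub_distrib, hzero, ← Finset.sum_div]
        ring
      rw [hsumeq] at hprod
      have hmono : Real.exp (-(∑ k, (α k - 1) ^ 2) / 4) ≤ Real.exp (-(ε ^ 2) / 4) := by
        apply Real.exp_le_exp.mpr
        linarith
      set t : ℝ := ε ^ 2 / 4 with ht
      have ht0 : 0 < t := by positivity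
      have ht1 : t ≤ 1 := by nlinarith
      have hexp : Real.exp (-(ε ^ 2) / 4) ≤ 1 - t / 2 := by
        have h1t : (1 : ℝ) + t ≤ Real.exp t := by
          have := Real.add_one_le_exp t
          linarith
        have hneg : Real.exp (-(ε ^ 2) / 4) = (Real.exp t)⁻¹ := by
          rw [← Real.exp_neg]; congr 1; rw [ht]; ring
        rw [hneg]
        have hinv : (Real.exp t)⁻¹ ≤ (1 + t)⁻¹ := by
          apply inv_anti₀ (by linarith) h1t
        have : (1 + t)⁻¹ ≤ 1 - t / 2 := by
          rw [inv_le_iff_one_le_mul₀ (by linarith)]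
          nlinarith
        linarith
      have hfin : 1 - t / 2 ≤ 1 - ε ^ 2 / (4 * d) := by
        have : ε ^ 2 / (4 * (d : ℝ)) ≤ ε ^ 2 / 8 := by
          apply div_le_div_of_nonneg_left (by positivity) (by norm_num) h4d
        rw [ht]
        linarith
      linarith
end

section
/- For nonnegative reals a, b and real x with |x| ≤ 1/2, (a² + b² + 2ab·cos(2πx))/(a+b)² ≤ 1 − (16ab/(a+b)²)·x² (when a+b > 0). Moreover, if a, b ∈ [1/2, 3/2], then 16ab/(a+b)² ≥ 3, hence the ratio is at most 1 − 3x². -/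
lemma cos_two_pi_le (x : ℝ) (hx : |x| ≤ 1 / 2) :
    Real.cos (2 * Real.pi * x) ≤ 1 - 8 * x ^ 2 := by
  have hpi := Real.pi_pos
  set t := |x| with ht
  have ht0 : 0 ≤ t := abs_nonneg x
  have hcos : Real.cos (2 * Real.pi * x) = Real.cos (2 * (Real.pi * t)) := by
    rw [← Real.cos_abs]
    congr 1
    rw [abs_mul, abs_mul, abs_of_pos hpi, abs_of_nonneg (by norm_num : (0:ℝ) ≤ 2)]
    ring
  have hsin : 2 / Real.pi * (Real.pi * t) ≤ Real.sin (Real.pi * t) := by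
    apply Real.mul_le_sin (by positivity)
    nlinarith
  have h2t : 2 / Real.pi * (Real.pi * t) = 2 * t := by field_simp
  rw [h2t] at hsin
  have hsin' : 2 * t ≤ Real.sin (Real.pi * t) := hsin
  have h1 : Real.cos (2 * (Real.pi * t)) = 1 - 2 * Real.sin (Real.pi * t) ^ 2 := by
    rw [Real.cos_two_mul, ← Real.sin_sq_add_cos_sq (Real.pi * t)]; ring
  have hx2 : t ^ 2 = x ^ 2 := sq_abs x
  rw [hcos, h1]
  nlinarith [Real.sin_nonneg_of_nonneg_of_le_pi (by positivity : 0 ≤ Real.pi * t)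
    (by nlinarith : Real.pi * t ≤ Real.pi)]

theorem stmt_11 (a b x : ℝ) (ha : 0 ≤ a) (hb : 0 ≤ b) (hab : 0 < a + b)
    (hx : |x| ≤ 1 / 2) :
    (a ^ 2 + b ^ 2 + 2 * a * b * Real.cos (2 * Real.pi * x)) / (a + b) ^ 2
      ≤ 1 - 16 * a * b / (a + b) ^ 2 * x ^ 2 ∧
    (1 / 2 ≤ a → a ≤ 3 / 2 → 1 / 2 ≤ b → b ≤ 3 / 2 →
      3 ≤ 16 * a * b / (a + b) ^ 2 ∧
      (a ^ 2 + b ^ 2 + 2 * a * b * Real.cos (2 * Real.pi * x)) / (a + b) ^ 2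
        ≤ 1 - 3 * x ^ 2) := by
  have hc := cos_two_pi_le x hx
  have hsq : (0:ℝ) < (a + b) ^ 2 := by positivity
  have hmain : (a ^ 2 + b ^ 2 + 2 * a * b * Real.cos (2 * Real.pi * x)) / (a + b) ^ 2
      ≤ 1 - 16 * a * b / (a + b) ^ 2 * x ^ 2 := by
    rw [div_le_iff₀ hsq, sub_mul, div_mul_eq_mul_div, div_mul_eq_mul_div,
      mul_div_assoc, div_self (ne_of_gt hsq)]
    nlinarith [mul_nonneg ha hb, sq_nonneg x]
  refine ⟨hmain, fun h1 h2 h3 h4 => ?_⟩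
  have hcoef : 3 ≤ 16 * a * b / (a + b) ^ 2 := by
    rw [le_div_iff₀ hsq]
    nlinarith
  refine ⟨hcoef, hmain.trans ?_⟩
  nlinarith [sq_nonneg x, mul_le_mul_of_nonneg_right hcoef (sq_nonneg x)]
end

section
/- Let ψ = (1/√d)∑ₖ √αₖ e^{iπ(θₖ+nₖ)} eₖ be a unit vector in ℂ^d with αₖ ≥ 0, ∑ₖ αₖ = d, θₖ ∈ [−1/2,1/2], nₖ ∈ {0,1}. Then the likelihood L(ψ) = (∏ₖ |⟨eₖ,ψ⟩|²)·(∏_{j<k} |⟨(eⱼ+ieₖ)/√2, ψ⟩|²·|⟨(eⱼ−ieₖ)/√2, ψ⟩|²) equals (1/(d^d (2d)^{d²−d}))·(∏ₖ αₖ)·(∏_{j<k} (αⱼ² + αₖ² + 2αⱼαₖ cos(2π(θⱼ−θₖ+nⱼ−nₖ)))). -/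
/-!
Write `ψ k = √(p k) e^{i φ k}`. The amplitudes of `ψ` on `(e_j ± i e_k)/√2` are
`(ψ j ∓ i ψ k)/√2`, whose product is `(ψ j ² + ψ k ²)/2`; hence each pair `j < k` contributes
`|p j e^{2iφ j} + p k e^{2iφ k}|² / 4`, which is
`(p j² + p k² + 2 p j p k cos 2(φ j - φ k)) / 4`.
For `p k = α k / d` and `φ k = π (θ k + n k)` the powers of `d` and `2` collect into
`d^d (2d)^(d² - d)`, the exponent `d² - d` being twice the number of pairs.
-/

open Finset

/-- The likelihood of one set of basic observations: measuring each `|e_k⟩⟨e_k|` once and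
each `|(e_j ± i e_k)/√2⟩⟨(e_j ± i e_k)/√2|` once for `j < k`. -/
noncomputable def basicLikelihood {d : ℕ} (ψ : EuclideanSpace ℂ (Fin d)) : ℝ :=
  (∏ k, ‖(inner ℂ (EuclideanSpace.single k (1 : ℂ)) ψ : ℂ)‖ ^ 2) *
  ∏ j, ∏ k ∈ Finset.univ.filter (fun k => j < k),
    (‖(inner ℂ ((Real.sqrt 2 : ℂ)⁻¹ • (EuclideanSpace.single j (1 : ℂ)
        + Complex.I • EuclideanSpace.single k (1 : ℂ))) ψ : ℂ)‖ ^ 2 *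
     ‖(inner ℂ ((Real.sqrt 2 : ℂ)⁻¹ • (EuclideanSpace.single j (1 : ℂ)
        - Complex.I • EuclideanSpace.single k (1 : ℂ))) ψ : ℂ)‖ ^ 2)

open Complex

lemma normSq_ofReal_mul_exp_add (a b x y : ℝ) :
    normSq (a * exp (x * I) + b * exp (y * I)) = a ^ 2 + b ^ 2 + 2 * a * b * Real.cos (x - y) := by
  rw [exp_mul_I, exp_mul_I, Real.cos_sub]
  simp only [normSq_apply, add_re, add_im, mul_re, mul_im, ofReal_re, ofReal_im, cos_ofReal_re,
    cos_ofReal_im, sin_ofReal_re, sin_ofReal_im, I_re, I_im, mul_zero, mul_one, zero_mul,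
    sub_self, sub_zero, add_zero, zero_add]
  nlinarith [Real.sin_sq_add_cos_sq x, Real.sin_sq_add_cos_sq y]

lemma norm_sub_I_mul_mul_norm_add_I_mul (z w : ℂ) :
    ‖z - I * w‖ * ‖z + I * w‖ = ‖z ^ 2 + w ^ 2‖ := by
  rw [← norm_mul]
  congr 1
  linear_combination (-w ^ 2) * I_sq

section EuclideanSpace

variable {ι : Type*} [Fintype ι] [DecidableEq ι] (ψ : EuclideanSpace ℂ ι) (j k : ι)

lemma inner_single_add_I_smul_single :
    inner ℂ (EuclideanSpace.single j (1 : ℂ) + I • EuclideanSpace.single k 1) ψ =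
      ψ j - I * ψ k := by
  simp [EuclideanSpace.inner_single_left, sub_eq_add_neg, mul_comm]

lemma inner_single_sub_I_smul_single :
    inner ℂ (EuclideanSpace.single j (1 : ℂ) - I • EuclideanSpace.single k 1) ψ =
      ψ j + I * ψ k := by
  simp [EuclideanSpace.inner_single_left, mul_comm]

end EuclideanSpace

lemma basicLikelihood_eq {d : ℕ} (ψ : EuclideanSpace ℂ (Fin d)) :
    basicLikelihood ψ =
      (∏ k, ‖ψ k‖ ^ 2) *
        ∏ j, ∏ k ∈ univ.filter (j < ·), ‖ψ j ^ 2 + ψ k ^ 2‖ ^ 2 / 4 := by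
  have hsqrt2 : ‖(Real.sqrt 2 : ℂ)⁻¹‖ ^ 2 = 2⁻¹ := by
    rw [norm_inv, inv_pow, norm_real, Real.norm_eq_abs, sq_abs, Real.sq_sqrt zero_le_two]
  unfold basicLikelihood
  congr! 3 with k _ j _ k _
  · simp [EuclideanSpace.inner_single_left]
  · rw [inner_smul_left, inner_smul_left, inner_single_add_I_smul_single,
      inner_single_sub_I_smul_single, norm_mul, norm_mul, norm_conj, ← mul_pow,
      mul_mul_mul_comm, norm_sub_I_mul_mul_norm_add_I_mul, mul_pow, ← sq, hsqrt2]
    ring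

lemma basicLikelihood_of_polar {d : ℕ} (ψ : EuclideanSpace ℂ (Fin d)) (p φ : Fin d → ℝ)
    (hp : ∀ k, 0 ≤ p k) (hψ : ∀ k, ψ k = Real.sqrt (p k) * exp (φ k * I)) :
    basicLikelihood ψ = (∏ k, p k) * ∏ j, ∏ k ∈ univ.filter (j < ·),
      (p j ^ 2 + p k ^ 2 + 2 * p j * p k * Real.cos (2 * (φ j - φ k))) / 4 := by
  have hsq k : ψ k ^ 2 = (p k : ℂ) * exp ((2 * φ k : ℝ) * I) := by
    rw [hψ, mul_pow, ← ofReal_pow, Real.sq_sqrt (hp k), ← exp_nat_mul]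
    push_cast; ring_nf
  have hnorm k : ‖ψ k‖ ^ 2 = p k := by
    rw [hψ, norm_mul, norm_exp_ofReal_mul_I, mul_one, norm_real, Real.norm_eq_abs, sq_abs,
      Real.sq_sqrt (hp k)]
  simp_rw [basicLikelihood_eq, hnorm, hsq, ← normSq_eq_norm_sq, normSq_ofReal_mul_exp_add,
    mul_sub]

lemma sum_card_filter_lt_mul_two (d : ℕ) :
    (∑ j : Fin d, #(univ.filter (j < ·))) * 2 = d ^ 2 - d := by
  have h (j : Fin d) : univ.filter (j < ·) = Ioi j := by ext; simp
  simp_rw [h, Fin.card_Ioi]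
  rw [Fin.sum_univ_eq_sum_range (fun j => d - 1 - j), sum_range_reflect (fun i => i) d,
    sum_range_id_mul_two, Nat.mul_sub, mul_one, sq]

lemma prod_prod_filter_lt_div_sq {M : Type*} [DivisionCommMonoid M] {d : ℕ}
    (f : Fin d → Fin d → M) (c : M) :
    ∏ j, ∏ k ∈ univ.filter (j < ·), f j k / c ^ 2 =
      (∏ j, ∏ k ∈ univ.filter (j < ·), f j k) / c ^ (d ^ 2 - d) := by
  simp_rw [prod_div_distrib, prod_const, prod_pow_eq_pow_sum, ← pow_mul, mul_comm 2,
    sum_card_filter_lt_mul_two]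

theorem stmt_15_general (d : ℕ) (α θ : Fin d → ℝ) (nn : Fin d → ℕ)
    (hα0 : ∀ k, 0 ≤ α k)
    (ψ : EuclideanSpace ℂ (Fin d))
    (hψ : ∀ k, ψ k = ((Real.sqrt (α k) / Real.sqrt d : ℝ) : ℂ) *
      Complex.exp (Complex.I * (Real.pi : ℂ) * ((θ k : ℂ) + (nn k : ℂ)))) :
    basicLikelihood ψ =
      1 / ((d : ℝ) ^ d * (2 * d : ℝ) ^ (d ^ 2 - d)) * (∏ k, α k) *
        ∏ j, ∏ k ∈ Finset.univ.filter (fun k => j < k),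
          (α j ^ 2 + α k ^ 2 + 2 * α j * α k *
            Real.cos (2 * Real.pi * (θ j - θ k + (nn j : ℝ) - (nn k : ℝ)))) := by
  have hψ' k : ψ k = Real.sqrt (α k / d) * exp ((Real.pi * (θ k + nn k) : ℝ) * I) := by
    rw [hψ, Real.sqrt_div' _ d.cast_nonneg]
    push_cast; ring_nf
  have hpair j k : ((α j / d) ^ 2 + (α k / d) ^ 2 + 2 * (α j / d) * (α k / d) *
      Real.cos (2 * (Real.pi * (θ j + nn j) - Real.pi * (θ k + nn k)))) / 4 =
      (α j ^ 2 + α k ^ 2 + 2 * α j * α k *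
        Real.cos (2 * Real.pi * (θ j - θ k + (nn j : ℝ) - (nn k : ℝ)))) / (2 * d) ^ 2 := by
    ring_nf
  rw [basicLikelihood_of_polar ψ _ _ (fun k => div_nonneg (hα0 k) d.cast_nonneg) hψ']
  simp_rw [hpair, prod_prod_filter_lt_div_sq, prod_div_distrib, prod_const, card_univ,
    Fintype.card_fin]
  ring

theorem stmt_15 (d : ℕ) (hd : 0 < d) (α θ : Fin d → ℝ) (nn : Fin d → ℕ)
    (hα0 : ∀ k, 0 ≤ α k) (hαsum : ∑ k, α k = (d : ℝ))
    (hθ : ∀ k, θ k ∈ Set.Icc (-(1 / 2) : ℝ) (1 / 2))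
    (hn : ∀ k, nn k = 0 ∨ nn k = 1)
    (ψ : EuclideanSpace ℂ (Fin d))
    (hψ : ∀ k, ψ k = ((Real.sqrt (α k) / Real.sqrt d : ℝ) : ℂ) *
      Complex.exp (Complex.I * (Real.pi : ℂ) * ((θ k : ℂ) + (nn k : ℂ)))) :
    basicLikelihood ψ =
      1 / ((d : ℝ) ^ d * (2 * d : ℝ) ^ (d ^ 2 - d)) * (∏ k, α k) *
        ∏ j, ∏ k ∈ Finset.univ.filter (fun k => j < k),
          (α j ^ 2 + α k ^ 2 + 2 * α j * α k *
            Real.cos (2 * Real.pi * (θ j - θ k + (nn j : ℝ) - (nn k : ℝ)))) :=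
  stmt_15_general d α θ nn hα0 ψ hψ
end
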